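/- arXiv:hep-th/0104199 — 2 statements merged into one kernel-verified Lean document; each statement's English description precedes it below -/
import Mathlib

section
/- Let D : E₊ → E₋ be a linear map between finite-dimensional inner product spaces, and let Δ₊ = D*D and Δ₋ = DD*. Then for every t > 0, Tr(exp(-t·Δ₊)) - Tr(exp(-t·Δ₋)) = dim(ker D) - dim(ker D*), i.e., the supertrace of the heat operators equals the index of D. -/
open NormedSpace Module

section Aux

variable {E F : Type*}
  [NormedAddCommGroup E] [InnerProductSpace ℂ E] [FiniteDimensional ℂ E]
  [NormedAddCommGroup F] [InnerProductSpace ℂ F] [FiniteDimensional ℂ F]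

lemma aux_comm (D : E →ₗ[ℂ] F) (n : ℕ) :
    D ∘ₗ ((LinearMap.adjoint D ∘ₗ D) ^ n) = ((D ∘ₗ LinearMap.adjoint D) ^ n) ∘ₗ D := by
  induction n with
  | zero => simp [Module.End.one_eq_id]
  | succ n ih =>
    rw [pow_succ', pow_succ']
    calc D ∘ₗ ((LinearMap.adjoint D ∘ₗ D) * (LinearMap.adjoint D ∘ₗ D) ^ n)
        = (D ∘ₗ LinearMap.adjoint D) ∘ₗ (D ∘ₗ (LinearMap.adjoint D ∘ₗ D) ^ n) := by
          simp [Module.End.mul_eq_comp, LinearMap.comp_assoc]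
      _ = ((D ∘ₗ LinearMap.adjoint D) * (D ∘ₗ LinearMap.adjoint D) ^ n) ∘ₗ D := by
          rw [ih]; simp [Module.End.mul_eq_comp, LinearMap.comp_assoc]

lemma aux_trace_pow (D : E →ₗ[ℂ] F) (n : ℕ) (hn : n ≠ 0) :
    LinearMap.trace ℂ E ((LinearMap.adjoint D ∘ₗ D) ^ n)
      = LinearMap.trace ℂ F ((D ∘ₗ LinearMap.adjoint D) ^ n) := by
  obtain ⟨m, rfl⟩ := Nat.exists_eq_succ_of_ne_zero hn
  have h1 : ((LinearMap.adjoint D ∘ₗ D) ^ (m + 1) : Module.End ℂ E)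
      = (((LinearMap.adjoint D ∘ₗ D) ^ m) ∘ₗ LinearMap.adjoint D) ∘ₗ D := by
    rw [pow_succ]; simp [Module.End.mul_eq_comp, LinearMap.comp_assoc]
  rw [h1, LinearMap.trace_comp_comm']
  have h2 : D ∘ₗ (((LinearMap.adjoint D ∘ₗ D) ^ m) ∘ₗ LinearMap.adjoint D)
      = ((D ∘ₗ LinearMap.adjoint D) ^ (m + 1) : Module.End ℂ F) := by
    rw [pow_succ, ← LinearMap.comp_assoc, aux_comm]
    simp [Module.End.mul_eq_comp, LinearMap.comp_assoc]
  rw [h2]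

/-- The trace as a continuous linear functional on continuous endomorphisms. -/
noncomputable def traceCLM (E : Type*) [NormedAddCommGroup E] [InnerProductSpace ℂ E]
    [FiniteDimensional ℂ E] : (E →L[ℂ] E) →L[ℂ] ℂ :=
  LinearMap.toContinuousLinearMap ((LinearMap.trace ℂ E) ∘ₗ ContinuousLinearMap.coeLM ℂ)

lemma coe_clm_pow (A : E →L[ℂ] E) (n : ℕ) :
    ((A ^ n : E →L[ℂ] E) : E →ₗ[ℂ] E) = (A : E →ₗ[ℂ] E) ^ n :=
  map_pow (ContinuousLinearMap.toLinearMapRingHom : (E →L[ℂ] E) →+* (E →ₗ[ℂ] E)) A n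

lemma traceCLM_apply (A : E →L[ℂ] E) :
    traceCLM E A = LinearMap.trace ℂ E A.toLinearMap := rfl

lemma trace_exp_eq (A : E →L[ℂ] E) :
    LinearMap.trace ℂ E (exp A).toLinearMap
      = ∑' (n : ℕ), ((n.factorial : ℂ))⁻¹ • LinearMap.trace ℂ E (A.toLinearMap ^ n) := by
  rw [← traceCLM_apply, exp_eq_tsum (𝕂 := ℂ),
    (traceCLM E).map_tsum (expSeries_summable' (𝕂 := ℂ) A)]
  congr 1
  ext n
  rw [map_smul, traceCLM_apply, coe_clm_pow]

lemma trace_exp_summable (A : E →L[ℂ] E) :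
    Summable (fun n : ℕ => ((n.factorial : ℂ))⁻¹ • LinearMap.trace ℂ E (A.toLinearMap ^ n)) := by
  have h := (expSeries_summable' (𝕂 := ℂ) A).map
    (traceCLM E).toLinearMap.toAddMonoidHom (traceCLM E).continuous
  refine h.congr fun n => ?_
  simp only [LinearMap.toAddMonoidHom_coe, ContinuousLinearMap.coe_coe, Function.comp_apply]
  rw [map_smul, traceCLM_apply, coe_clm_pow]

lemma ker_adjoint_eq (D : E →ₗ[ℂ] F) :
    LinearMap.ker (LinearMap.adjoint D) = (LinearMap.range D)ᗮ := by
  ext x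
  simp only [LinearMap.mem_ker, Submodule.mem_orthogonal]
  constructor
  · rintro h _ ⟨y, rfl⟩
    rw [← LinearMap.adjoint_inner_right, h, inner_zero_right]
  · intro h
    apply ext_inner_left ℂ
    intro y
    rw [LinearMap.adjoint_inner_right, inner_zero_right]
    exact h _ ⟨y, rfl⟩

end Aux

/-- **Supertrace of the heat operators equals the index.**
For a linear map `D : E₊ → E₋` between finite-dimensional complex inner product
spaces, with `Δ₊ = D* ∘ D` and `Δ₋ = D ∘ D*`, for every `t > 0` we have
`Tr exp(-t Δ₊) - Tr exp(-t Δ₋) = dim ker D - dim ker D*`. -/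
theorem stmt_0
    {Eplus Eminus : Type*}
    [NormedAddCommGroup Eplus] [InnerProductSpace ℂ Eplus] [FiniteDimensional ℂ Eplus]
    [NormedAddCommGroup Eminus] [InnerProductSpace ℂ Eminus] [FiniteDimensional ℂ Eminus]
    (D : Eplus →ₗ[ℂ] Eminus) (t : ℝ) (ht : 0 < t) :
    LinearMap.trace ℂ Eplus
        (ContinuousLinearMap.toLinearMap
          (NormedSpace.exp ((-t : ℂ) •
            (LinearMap.toContinuousLinearMap (LinearMap.adjoint D ∘ₗ D)))))
      - LinearMap.trace ℂ Eminus
        (ContinuousLinearMap.toLinearMap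
          (NormedSpace.exp ((-t : ℂ) •
            (LinearMap.toContinuousLinearMap (D ∘ₗ LinearMap.adjoint D)))))
      = (Module.finrank ℂ (LinearMap.ker D) : ℂ)
        - (Module.finrank ℂ (LinearMap.ker (LinearMap.adjoint D)) : ℂ) := by
  set A := (-t : ℂ) • (LinearMap.toContinuousLinearMap (LinearMap.adjoint D ∘ₗ D))
  set B := (-t : ℂ) • (LinearMap.toContinuousLinearMap (D ∘ₗ LinearMap.adjoint D))
  have hA : A.toLinearMap = (-t : ℂ) • (LinearMap.adjoint D ∘ₗ D) := by
    simp [A]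
  have hB : B.toLinearMap = (-t : ℂ) • (D ∘ₗ LinearMap.adjoint D) := by
    simp [B]
  rw [trace_exp_eq A, trace_exp_eq B,
    ← Summable.tsum_sub (trace_exp_summable A) (trace_exp_summable B)]
  have hterm : ∀ n : ℕ, n ≠ 0 →
      ((n.factorial : ℂ))⁻¹ • LinearMap.trace ℂ Eplus (A.toLinearMap ^ n)
        - ((n.factorial : ℂ))⁻¹ • LinearMap.trace ℂ Eminus (B.toLinearMap ^ n) = 0 := by
    intro n hn
    rw [hA, hB, smul_pow, smul_pow, map_smul, map_smul, aux_trace_pow D n hn]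
    ring_nf
  rw [tsum_eq_single 0 hterm]
  simp only [pow_zero, Nat.factorial_zero, Nat.cast_one, inv_one, one_smul,
    LinearMap.trace_one]
  -- now: (finrank ℂ Eplus : ℂ) - finrank ℂ Eminus = finrank ker D - finrank ker D*
  have h1 := LinearMap.finrank_range_add_finrank_ker D
  have h2 : Module.finrank ℂ (LinearMap.range D)
      + Module.finrank ℂ (LinearMap.ker (LinearMap.adjoint D))
      = Module.finrank ℂ Eminus := by
    rw [ker_adjoint_eq D]
    exact Submodule.finrank_add_finrank_orthogonal _
  have key : Module.finrank ℂ Eplus + Module.finrank ℂ (LinearMap.ker (LinearMap.adjoint D))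
      = Module.finrank ℂ (LinearMap.ker D) + Module.finrank ℂ Eminus := by omega
  have := congrArg (fun n : ℕ => (n : ℂ)) key
  push_cast at this
  linear_combination this
end

section
/- Let V be a finite-dimensional complex inner product space and A : V → V an operator all of whose eigenvalues have positive real part, except for its kernel; assume V = ker A ⊕ W where W is A-invariant and A|_W has all eigenvalues with positive real part. Then lim_{t→∞} exp(-tA) = P, where P is the projection onto ker A along W. -/
open Filter NormedSpace ENNReal
open scoped NNReal

open Filter NormedSpace

section aux
variable {E F : Type*} [NormedAddCommGroup E] [NormedSpace ℂ E] [CompleteSpace E]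
  [NormedAddCommGroup F] [NormedSpace ℂ F] [CompleteSpace F]

lemma aux_exp_apply_eig (C : E →L[ℂ] E) {v : E} {μ : ℂ} (h : C v = μ • v) :
    exp C v = exp μ • v := by
  have hpow : ∀ n : ℕ, (C ^ n) v = μ ^ n • v := by
    intro n; induction n with
    | zero => simp
    | succ n ih =>
      rw [pow_succ, pow_succ, ContinuousLinearMap.mul_apply, h, map_smul, ih, smul_smul]
      ring_nf
  calc exp C v = ∑' n : ℕ, (((n.factorial : ℂ)⁻¹) • C ^ n) v := by
        rw [exp_eq_tsum ℂ]
        exact (ContinuousLinearMap.apply ℂ E v).map_tsum (expSeries_summable' (𝕂 := ℂ) C)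
    _ = ∑' n : ℕ, (((n.factorial : ℂ)⁻¹) * μ ^ n) • v := by
        refine tsum_congr fun n => ?_
        rw [ContinuousLinearMap.smul_apply, hpow, smul_smul]
    _ = (∑' n : ℕ, (((n.factorial : ℂ)⁻¹) * μ ^ n)) • v := by
        rw [Summable.tsum_smul_const]
        simpa [smul_eq_mul] using expSeries_summable' (𝕂 := ℂ) μ
    _ = exp μ • v := by
        rw [exp_eq_tsum ℂ]
        simp [smul_eq_mul]

lemma aux_exp_comm (f : E →L[ℂ] E) (g : F →L[ℂ] F) (ι : F →L[ℂ] E)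
    (h : ∀ w, f (ι w) = ι (g w)) (w : F) : exp f (ι w) = ι (exp g w) := by
  have hpow : ∀ (n : ℕ) (w : F), (f ^ n) (ι w) = ι ((g ^ n) w) := by
    intro n
    induction n with
    | zero => simp
    | succ n ih =>
      intro w
      rw [pow_succ', pow_succ', ContinuousLinearMap.mul_apply, ContinuousLinearMap.mul_apply,
        ih, h]
  have hsum : Summable fun n : ℕ => ((n.factorial : ℂ)⁻¹) • (g ^ n) w := by
    refine Summable.of_norm_bounded ((norm_expSeries_summable' (𝕂 := ℂ) g).mul_right ‖w‖) ?_
    intro n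
    calc ‖((n.factorial : ℂ)⁻¹) • (g ^ n) w‖ = ‖(((n.factorial : ℂ)⁻¹) • g ^ n) w‖ := by
          rw [ContinuousLinearMap.smul_apply]
      _ ≤ ‖((n.factorial : ℂ)⁻¹) • g ^ n‖ * ‖w‖ := ContinuousLinearMap.le_opNorm _ _
  calc exp f (ι w) = ∑' n : ℕ, (((n.factorial : ℂ)⁻¹) • f ^ n) (ι w) := by
        rw [exp_eq_tsum ℂ]
        exact (ContinuousLinearMap.apply ℂ E (ι w)).map_tsum (expSeries_summable' (𝕂 := ℂ) f)
    _ = ∑' n : ℕ, ι (((n.factorial : ℂ)⁻¹) • (g ^ n) w) := by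
        refine tsum_congr fun n => ?_
        rw [ContinuousLinearMap.smul_apply, hpow, map_smul]
    _ = ι (∑' n : ℕ, ((n.factorial : ℂ)⁻¹) • (g ^ n) w) := (ι.map_tsum hsum).symm
    _ = ι (exp g w) := by
        refine congrArg ι ?_
        rw [exp_eq_tsum ℂ]
        exact ((ContinuousLinearMap.apply ℂ F w).map_tsum (expSeries_summable' (𝕂 := ℂ) g)).symm

end aux


lemma aux_tendsto_pow_norm {𝔸 : Type*} [NormedRing 𝔸] [NormedAlgebra ℂ 𝔸] [CompleteSpace 𝔸]
    (a : 𝔸) (h : ∀ μ ∈ spectrum ℂ a, ‖μ‖₊ < 1) :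
    Tendsto (fun n : ℕ => ‖a ^ n‖) atTop (nhds 0) := by
  rcases subsingleton_or_nontrivial 𝔸 with hs | hn
  · have : ∀ n : ℕ, a ^ n = 0 := fun n => Subsingleton.elim _ _
    simpa [this] using tendsto_const_nhds
  · have hρ : spectralRadius ℂ a < 1 := by
      simpa using spectrum.spectralRadius_lt_of_forall_lt a h
    obtain ⟨r, hρr, hr1⟩ := ENNReal.lt_iff_exists_nnreal_btwn.mp hρ
    have hgel := spectrum.pow_nnnorm_pow_one_div_tendsto_nhds_spectralRadius a
    have hev : ∀ᶠ n : ℕ in atTop, (‖a ^ n‖₊ : ℝ≥0∞) ^ (1 / (n : ℝ)) < (r : ℝ≥0∞) :=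
      hgel.eventually_lt_const hρr
    have hr1' : (r : ℝ) < 1 := by exact_mod_cast hr1
    have hbound : ∀ᶠ n : ℕ in atTop, ‖a ^ n‖ ≤ (r : ℝ) ^ n := by
      filter_upwards [hev, eventually_ge_atTop 1] with n hn1 hn2
      have hnne : (n : ℝ) ≠ 0 := by positivity
      have h1 : ((‖a ^ n‖₊ : ℝ≥0∞) ^ (1 / (n : ℝ))) ^ (n : ℝ) ≤ (r : ℝ≥0∞) ^ (n : ℝ) :=
        ENNReal.rpow_le_rpow hn1.le (by positivity)
      rw [← ENNReal.rpow_mul, one_div, inv_mul_cancel₀ hnne, ENNReal.rpow_one,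
        ENNReal.rpow_natCast, ← ENNReal.coe_pow] at h1
      have h2 : (‖a ^ n‖₊ : ℝ≥0∞) ≤ ((r ^ n : ℝ≥0) : ℝ≥0∞) := h1
      have h3 : ‖a ^ n‖₊ ≤ r ^ n := by exact_mod_cast h2
      calc ‖a ^ n‖ = ((‖a ^ n‖₊ : ℝ≥0) : ℝ) := rfl
        _ ≤ ((r ^ n : ℝ≥0) : ℝ) := by exact_mod_cast h3
        _ = (r : ℝ) ^ n := by push_cast; ring
    have hgeom : Tendsto (fun n : ℕ => (r : ℝ) ^ n) atTop (nhds 0) :=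
      tendsto_pow_atTop_nhds_zero_of_lt_one r.coe_nonneg hr1'
    exact squeeze_zero' (Eventually.of_forall fun n => norm_nonneg _) hbound hgeom

section spec
variable {W : Type*} [NormedAddCommGroup W] [NormedSpace ℂ W] [FiniteDimensional ℂ W]

/-- If all eigenvalues of `B` have positive real part, then every element of the
spectrum of `exp (-B)` has norm `< 1`. -/
lemma aux_spectrum_exp_neg (B : W →L[ℂ] W)
    (hB : ∀ μ : ℂ, Module.End.HasEigenvalue ((B : W →ₗ[ℂ] W) : Module.End ℂ W) μ → 0 < μ.re) :
    ∀ μ ∈ spectrum ℂ (exp (-B)), ‖μ‖₊ < 1 := by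
  intro μ hμ
  set e := Module.End.toContinuousLinearMap (𝕜 := ℂ) W with he_def
  have he : e ((exp (-B) : W →L[ℂ] W) : W →ₗ[ℂ] W) = exp (-B) :=
    ContinuousLinearMap.ext fun _ => rfl
  have hμ' : μ ∈ spectrum ℂ (((exp (-B) : W →L[ℂ] W)) : W →ₗ[ℂ] W) := by
    rw [← AlgEquiv.spectrum_eq e, he]; exact hμ
  have hev : Module.End.HasEigenvalue
      (((exp (-B) : W →L[ℂ] W)) : W →ₗ[ℂ] W) μ :=
    Module.End.hasEigenvalue_iff_mem_spectrum.mpr hμ'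
  set E := Module.End.eigenspace (((exp (-B) : W →L[ℂ] W)) : W →ₗ[ℂ] W) μ with hE_def
  have hcomm : Commute B (exp (-B)) := ((Commute.refl B).neg_right).exp_right
  have hEinv : ∀ x ∈ E, (B : W →ₗ[ℂ] W) x ∈ E := by
    intro x hx
    rw [hE_def, Module.End.mem_eigenspace_iff] at hx ⊢
    show exp (-B) (B x) = μ • B x
    calc exp (-B) (B x) = ((exp (-B)) * B) x := rfl
      _ = (B * exp (-B)) x := by rw [hcomm.eq]
      _ = B (exp (-B) x) := rfl
      _ = B (μ • x) := congrArg B hx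
      _ = μ • B x := map_smul _ _ _
  have : Nontrivial E := Submodule.nontrivial_iff_ne_bot.mpr hev
  obtain ⟨lam, hlam⟩ := Module.End.exists_eigenvalue ((B : W →ₗ[ℂ] W).restrict hEinv)
  obtain ⟨u, hu⟩ := hlam.exists_hasEigenvector
  have hu1 : B (u : W) = lam • (u : W) := by
    have h1 := Module.End.mem_eigenspace_iff.mp hu.1
    have h2 := congrArg (Submodule.subtype E) h1
    simpa using h2
  have hune : (u : W) ≠ 0 := fun h0 => hu.2 (by exact_mod_cast Subtype.ext h0)
  have hlre : 0 < lam.re := hB lam <| Module.End.hasEigenvalue_of_hasEigenvector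
    ⟨Module.End.mem_eigenspace_iff.mpr hu1, hune⟩
  have heq1 : exp (-B) (u : W) = exp (-lam) • (u : W) := by
    refine aux_exp_apply_eig (-B) ?_
    rw [ContinuousLinearMap.neg_apply, hu1, ← neg_smul]
  have heq2 : exp (-B) (u : W) = μ • (u : W) :=
    Module.End.mem_eigenspace_iff.mp u.2
  have hμlam : μ = exp (-lam) :=
    smul_left_injective ℂ hune (heq2.symm.trans heq1)
  have : ‖μ‖ < 1 := by
    rw [hμlam, ← Complex.exp_eq_exp_ℂ, Complex.norm_exp]
    exact by rw [Real.exp_lt_one_iff]; simpa using hlre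
  exact_mod_cast this

end spec


section tend
variable {W : Type*} [NormedAddCommGroup W] [NormedSpace ℂ W] [FiniteDimensional ℂ W]

lemma aux_tendsto_exp_norm (B : W →L[ℂ] W)
    (hspec : ∀ μ ∈ spectrum ℂ (exp (-B)), ‖μ‖₊ < 1) :
    Filter.Tendsto (fun t : ℝ => ‖exp ((-t : ℂ) • B)‖) atTop (nhds 0) := by
  letI : NormedAlgebra ℚ (W →L[ℂ] W) := NormedAlgebra.restrictScalars ℚ ℂ _
  have hc : Continuous fun s : ℝ => exp ((-s : ℂ) • B) :=
    exp_continuous.comp ((Complex.continuous_ofReal.neg).smul continuous_const)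
  obtain ⟨M, hM⟩ :=
    (isCompact_Icc (a := (0:ℝ)) (b := 1)).exists_bound_of_continuousOn hc.continuousOn
  have hpow : Tendsto (fun n : ℕ => ‖(exp (-B)) ^ n‖) atTop (nhds 0) :=
    aux_tendsto_pow_norm (exp (-B)) hspec
  have hfloor : Tendsto (fun t : ℝ => ‖(exp (-B)) ^ ⌊t⌋₊‖) atTop (nhds 0) :=
    hpow.comp tendsto_nat_floor_atTop
  have hbound : ∀ᶠ t : ℝ in atTop, ‖exp ((-t : ℂ) • B)‖ ≤ ‖(exp (-B)) ^ ⌊t⌋₊‖ * M := by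
    filter_upwards [eventually_ge_atTop (0:ℝ)] with t ht
    set n := ⌊t⌋₊ with hn_def
    set s := t - n with hs_def
    have hs0 : (0:ℝ) ≤ s := sub_nonneg.2 (Nat.floor_le ht)
    have hs1 : s ≤ 1 := by
      have := Nat.lt_floor_add_one t
      rw [hs_def]; linarith
    have hcast : (-t : ℂ) = -(n : ℂ) + (-s : ℂ) := by
      rw [hs_def]; push_cast; ring
    have hsplit : (-t : ℂ) • B = (n • (-B)) + ((-s : ℂ) • B) := by
      rw [hcast, add_smul]
      congr 1
      rw [smul_neg, ← Nat.cast_smul_eq_nsmul ℂ n B, neg_smul]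
    have hcomm : Commute ((n : ℕ) • (-B)) ((-s : ℂ) • B) :=
      (((Commute.refl B).neg_left).smul_right _).smul_left _
    calc ‖exp ((-t : ℂ) • B)‖ = ‖exp (-B) ^ n * exp ((-s : ℂ) • B)‖ := by
          rw [hsplit, exp_add_of_commute hcomm, exp_nsmul]
      _ ≤ ‖exp (-B) ^ n‖ * ‖exp ((-s : ℂ) • B)‖ := norm_mul_le _ _
      _ ≤ ‖exp (-B) ^ n‖ * M :=
          mul_le_mul_of_nonneg_left (hM s ⟨hs0, hs1⟩) (norm_nonneg _)
  have hlim := hfloor.mul_const M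
  rw [zero_mul] at hlim
  exact squeeze_zero' (Eventually.of_forall fun t => norm_nonneg _) hbound hlim

end tend

private def auxInstTR (E : Type*) [NormedAddCommGroup E] [NormedSpace ℂ E] :
    IsTopologicalRing (E →L[ℂ] E) :=
  inferInstance

set_option synthInstance.maxHeartbeats 1000000 in
set_option maxHeartbeats 2000000 in
/-- Let `A` be an operator on a finite-dimensional complex space with an
`A`-invariant complement `W` of `ker A` on which all eigenvalues of `A` have
positive real part.  Then `exp(-tA) → P` as `t → ∞`, where `P` is the
(generally non-orthogonal) projection onto `ker A` along `W`. -/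
theorem stmt_14 {V : Type*}
    [NormedAddCommGroup V] [NormedSpace ℂ V] [FiniteDimensional ℂ V]
    (A : V →L[ℂ] V) (W : Submodule ℂ V)
    (hcompl : IsCompl (LinearMap.ker (A : V →ₗ[ℂ] V)) W)
    (hinv : ∀ w ∈ W, (A : V →ₗ[ℂ] V) w ∈ W)
    (heig : ∀ μ : ℂ, Module.End.HasEigenvalue
        ((A : V →ₗ[ℂ] V).restrict hinv : Module.End ℂ W) μ → 0 < μ.re) :
    Filter.Tendsto (fun t : ℝ => NormedSpace.exp ((-t : ℂ) • A)) Filter.atTop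
      (nhds (LinearMap.toContinuousLinearMap
        ((LinearMap.ker (A : V →ₗ[ℂ] V)).subtype ∘ₗ
          (LinearMap.ker (A : V →ₗ[ℂ] V)).linearProjOfIsCompl W hcompl))) := by
  haveI := auxInstTR ↥W
  set K := LinearMap.ker (A : V →ₗ[ℂ] V) with hK_def
  set B : ↥W →L[ℂ] ↥W := LinearMap.toContinuousLinearMap ((A : V →ₗ[ℂ] V).restrict hinv)
    with hB_def
  set P : V →L[ℂ] V := LinearMap.toContinuousLinearMap
    (K.subtype ∘ₗ K.linearProjOfIsCompl W hcompl) with hP_def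
  set Q : V →L[ℂ] ↥W := LinearMap.toContinuousLinearMap
    (W.linearProjOfIsCompl K hcompl.symm) with hQ_def
  set ι : ↥W →L[ℂ] V := W.subtypeL with hι_def
  -- the coercion of `B` to a linear map is the restriction
  have hBcoe : (B : ↥W →ₗ[ℂ] ↥W) = (A : V →ₗ[ℂ] V).restrict hinv :=
    LinearMap.coe_toContinuousLinearMap _
  -- spectrum bound for `exp (-B)`
  have hspec : ∀ μ ∈ spectrum ℂ (exp (-B)), ‖μ‖₊ < 1 := by
    refine aux_spectrum_exp_neg B fun μ hμ => heig μ ?_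
    rwa [hBcoe] at hμ
  have htB := aux_tendsto_exp_norm B hspec
  -- the key operator identity
  have hAeig : ∀ (t : ℝ) (k : ↥K), exp ((-t : ℂ) • A) (k : V) = (k : V) := by
    intro t k
    have h0 : ((-t : ℂ) • A) (k : V) = (0 : ℂ) • (k : V) := by
      have hk : A (k : V) = 0 := k.2
      rw [ContinuousLinearMap.smul_apply, hk, smul_zero, zero_smul]
    rw [aux_exp_apply_eig _ h0, exp_zero, one_smul]
  have hAW : ∀ (t : ℝ) (w : ↥W),
      exp ((-t : ℂ) • A) (ι w) = ι (exp ((-t : ℂ) • B) w) := by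
    intro t
    refine aux_exp_comm _ _ ι fun w => ?_
    have hb : (ι (B w) : V) = A (ι w) := rfl
    rw [ContinuousLinearMap.smul_apply, ContinuousLinearMap.smul_apply, map_smul, hb]
  have hkey : ∀ t : ℝ, exp ((-t : ℂ) • A) - P = ι ∘L (exp ((-t : ℂ) • B)) ∘L Q := by
    intro t
    ext v
    obtain ⟨k, w, hv⟩ : ∃ (k : ↥K) (w : ↥W), (k : V) + (w : V) = v :=
      ⟨K.linearProjOfIsCompl W hcompl v, W.linearProjOfIsCompl K hcompl.symm v,
        Submodule.projection_add_projection_eq_self hcompl v⟩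
    have hPv : P v = (k : V) := by
      rw [hP_def, ← hv]
      simp [Submodule.linearProjOfIsCompl, Submodule.linearProjOfIsCompl_apply_left,
        Submodule.linearProjOfIsCompl_apply_right]
    have hQv : Q v = w := by
      rw [hQ_def, ← hv]
      simp [Submodule.linearProjOfIsCompl, Submodule.linearProjOfIsCompl_apply_left,
        Submodule.linearProjOfIsCompl_apply_right hcompl.symm]
    have hEv : exp ((-t : ℂ) • A) v = (k : V) + ι (exp ((-t : ℂ) • B) w) := by
      rw [← hv, map_add, hAeig t k]
      exact congrArg (fun x => (k : V) + x) (hAW t w)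
    simp only [ContinuousLinearMap.sub_apply, ContinuousLinearMap.comp_apply, hEv, hPv, hQv]
    abel
  -- conclude
  rw [tendsto_iff_norm_sub_tendsto_zero]
  have hbound : ∀ t : ℝ, ‖exp ((-t : ℂ) • A) - P‖ ≤ ‖ι‖ * (‖exp ((-t : ℂ) • B)‖ * ‖Q‖) := by
    intro t
    rw [hkey t]
    exact le_trans (ContinuousLinearMap.opNorm_comp_le _ _)
      (mul_le_mul_of_nonneg_left (ContinuousLinearMap.opNorm_comp_le _ _) (norm_nonneg _))
  have hlim := ((htB.mul_const ‖Q‖).const_mul ‖ι‖)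
  rw [zero_mul, mul_zero] at hlim
  exact squeeze_zero (fun t => norm_nonneg _) hbound hlim
end
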